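/- Let Z ∈ {0,1} satisfy E[(Z-α)^τ(1-β-Z)^{1-τ}] = (1-α-β)·p_τ for τ ∈ {0,1}, where p_1 = P(X=1), p_0 = P(X=0) for an underlying Bernoulli X. Let Z† = Z·1{η=0} + 1{η=1} with η independent of Z, P(η=±1)=δ, P(η=0)=1-2δ. Define φ†_τ(x) = (x - δ - α(1-2δ))^τ (1 - δ - β(1-2δ) - x)^{1-τ}. Then E[φ†_0(Z†)] = (1-2δ)(1-α-β)·P(X=0) and E[φ†_1(Z†)] = (1-2δ)(1-α-β)·P(X=1). -/

import Mathlib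

/-! Independence of `η` and `Z` gives `E[Z†] = P(η = 0) E[Z] + P(η = 1) = (1 - 2δ) P(Z = 1) + δ`;
both identities are this mean rewritten with `p0 + p1 = 1`. -/

open MeasureTheory ProbabilityTheory

section

variable {Ω ι : Type*}

lemma norm_ite_eq_le [DecidableEq ι] (η : Ω → ι) (a : ι) (ω : Ω) :
    ‖if η ω = a then (1 : ℝ) else 0‖ ≤ 1 := by
  split_ifs <;> simp

variable [MeasurableSpace Ω] {μ : Measure Ω}

lemma integral_eq_measureReal_of_forall_eq_zero_or_eq_one {Z : Ω → ℝ} (hZ : Measurable Z)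
    (hZval : ∀ ω, Z ω = 0 ∨ Z ω = 1) : ∫ ω, Z ω ∂μ = μ.real {ω | Z ω = 1} := by
  have hs : MeasurableSet {ω | Z ω = 1} := hZ (measurableSet_singleton 1)
  rw [← integral_indicator_one hs]
  congr 1 with ω
  rcases hZval ω with h | h <;> simp [h]

variable [MeasurableSpace ι] [MeasurableSingletonClass ι] [DecidableEq ι] {X : Ω → ℝ} {η : Ω → ι}

lemma measurable_ite_eq (hη : Measurable η) (a : ι) :
    Measurable fun ω => if η ω = a then (1 : ℝ) else 0 :=
  measurable_const.ite (hη (measurableSet_singleton a)) measurable_const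

lemma integrable_ite_eq [IsFiniteMeasure μ] (hη : Measurable η) (a : ι) :
    Integrable (fun ω => if η ω = a then (1 : ℝ) else 0) μ :=
  .of_bound (measurable_ite_eq hη a).aestronglyMeasurable 1 (.of_forall (norm_ite_eq_le η a))

lemma MeasureTheory.Integrable.mul_ite_eq (hX : Integrable X μ) (hη : Measurable η) (a : ι) :
    Integrable (fun ω => X ω * if η ω = a then 1 else 0) μ :=
  hX.mul_bdd (measurable_ite_eq hη a).aestronglyMeasurable (.of_forall (norm_ite_eq_le η a))

lemma MeasureTheory.Integrable.mul_ite_add_ite [IsFiniteMeasure μ] (hX : Integrable X μ)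
    (hη : Measurable η) (a b : ι) :
    Integrable (fun ω => X ω * (if η ω = a then 1 else 0) + if η ω = b then 1 else 0) μ :=
  (hX.mul_ite_eq hη a).add (integrable_ite_eq hη b)

lemma integral_ite_eq (hη : Measurable η) (a : ι) :
    ∫ ω, (if η ω = a then 1 else 0 : ℝ) ∂μ = μ.real {ω | η ω = a} := by
  have hs : MeasurableSet {ω | η ω = a} := hη (measurableSet_singleton a)
  rw [← integral_indicator_one hs]
  congr 1 with ω
  simp [Set.indicator]

lemma ProbabilityTheory.IndepFun.integral_mul_ite_eq (hXη : IndepFun X η μ)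
    (hX : AEStronglyMeasurable X μ) (hη : Measurable η) (a : ι) :
    ∫ ω, X ω * (if η ω = a then 1 else 0) ∂μ = (∫ ω, X ω ∂μ) * μ.real {ω | η ω = a} := by
  have hind : Measurable fun i : ι => if i = a then (1 : ℝ) else 0 :=
    measurable_ite_eq measurable_id a
  rw [← integral_ite_eq hη a]
  exact (hXη.comp measurable_id hind).integral_fun_mul_eq_mul_integral hX
    (hind.comp hη).aestronglyMeasurable

lemma ProbabilityTheory.IndepFun.integral_mul_ite_add_ite [IsFiniteMeasure μ]
    (hXη : IndepFun X η μ) (hX : Integrable X μ) (hη : Measurable η) (a b : ι) :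
    ∫ ω, (X ω * (if η ω = a then 1 else 0) + if η ω = b then 1 else 0) ∂μ
      = (∫ ω, X ω ∂μ) * μ.real {ω | η ω = a} + μ.real {ω | η ω = b} := by
  rw [integral_add (hX.mul_ite_eq hη a) (integrable_ite_eq hη b),
    hXη.integral_mul_ite_eq hX.aestronglyMeasurable hη a, integral_ite_eq hη b]

end

theorem stmt10_general {Ω : Type*} [MeasurableSpace Ω] (μ : Measure Ω) [IsProbabilityMeasure μ]
    (Z : Ω → ℝ) (η : Ω → ℤ) (α β δ p0 p1 : ℝ)
    (hsum : p0 + p1 = 1)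
    (hZmeas : Measurable Z) (hηmeas : Measurable η)
    (hZval : ∀ ω, Z ω = 0 ∨ Z ω = 1)
    (hZ1 : (μ {ω | Z ω = 1}).toReal = α * p0 + (1 - β) * p1)
    (hη1 : (μ {ω | η ω = 1}).toReal = δ)
    (hη0 : (μ {ω | η ω = 0}).toReal = 1 - 2 * δ)
    (hindep : IndepFun Z η μ)
    (Zdag : Ω → ℝ)
    (hZdag : ∀ ω, Zdag ω = Z ω * (if η ω = 0 then 1 else 0) + (if η ω = 1 then 1 else 0)) :
    (∫ ω, (1 - δ - β * (1 - 2 * δ) - Zdag ω) ∂μ) = (1 - 2 * δ) * (1 - α - β) * p0 ∧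
      (∫ ω, (Zdag ω - δ - α * (1 - 2 * δ)) ∂μ) = (1 - 2 * δ) * (1 - α - β) * p1 := by
  simp only [hZdag]
  have hZint : Integrable Z μ := .of_bound hZmeas.aestronglyMeasurable 1
    (.of_forall fun ω => by rcases hZval ω with h | h <;> simp [h])
  have hint := hZint.mul_ite_add_ite hηmeas 0 1
  have hmean : ∫ ω, (Z ω * (if η ω = 0 then 1 else 0) + if η ω = 1 then 1 else 0) ∂μ
      = (α * p0 + (1 - β) * p1) * (1 - 2 * δ) + δ := by
    rw [hindep.integral_mul_ite_add_ite hZint hηmeas 0 1,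
      integral_eq_measureReal_of_forall_eq_zero_or_eq_one hZmeas hZval]
    simp only [measureReal_def, hZ1, hη0, hη1]
  constructor
  · rw [integral_sub (integrable_const _) hint, hmean]
    simp only [integral_const, probReal_univ, smul_eq_mul, one_mul]
    linear_combination (-(1 - 2 * δ) * (1 - β)) * hsum
  · simp only [sub_sub]
    rw [integral_sub hint (integrable_const _), hmean]
    simp only [integral_const, probReal_univ, smul_eq_mul, one_mul]
    linear_combination (1 - 2 * δ) * α * hsum

theorem stmt10 {Ω : Type*} [MeasurableSpace Ω] (μ : Measure Ω) [IsProbabilityMeasure μ]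
    (Z : Ω → ℝ) (η : Ω → ℤ) (α β δ p0 p1 : ℝ)
    (hα : 0 < α) (hα1 : α < 1) (hβ : 0 < β) (hβ1 : β < 1) (hαβ : α + β < 1)
    (hδ0 : 0 < δ) (hδ2 : δ < 1 / 2)
    (hp0 : 0 ≤ p0) (hp1 : 0 ≤ p1) (hsum : p0 + p1 = 1)
    (hZmeas : Measurable Z) (hηmeas : Measurable η)
    (hZval : ∀ ω, Z ω = 0 ∨ Z ω = 1)
    (hZ1 : (μ {ω | Z ω = 1}).toReal = α * p0 + (1 - β) * p1)
    (hη1 : (μ {ω | η ω = 1}).toReal = δ)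
    (hηm1 : (μ {ω | η ω = -1}).toReal = δ)
    (hη0 : (μ {ω | η ω = 0}).toReal = 1 - 2 * δ)
    (hindep : IndepFun Z η μ)
    (Zdag : Ω → ℝ)
    (hZdag : ∀ ω, Zdag ω = Z ω * (if η ω = 0 then 1 else 0) + (if η ω = 1 then 1 else 0)) :
    (∫ ω, (1 - δ - β * (1 - 2 * δ) - Zdag ω) ∂μ) = (1 - 2 * δ) * (1 - α - β) * p0 ∧
      (∫ ω, (Zdag ω - δ - α * (1 - 2 * δ)) ∂μ) = (1 - 2 * δ) * (1 - α - β) * p1 :=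
  stmt10_general μ Z η α β δ p0 p1 hsum hZmeas hηmeas hZval hZ1 hη1 hη0 hindep Zdag hZdag
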